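/- Let n ≥ 2 and ℓ > 0. Let A_S be the n×n matrix with entry ℓ² at position (n,n) and zeros elsewhere, and let A₂,…,Aₙ be real symmetric n×n matrices whose n-th row and n-th column are zero, with upper-left (n−1)×(n−1) blocks A'₂,…,A'ₙ. Then n·D(A_S, A₂,…,Aₙ) = ℓ²·D'(A'₂,…,A'ₙ), where D is the n-dimensional mixed discriminant and D' is the (n−1)-dimensional mixed discriminant. -/

import Mathlib

/-- The mixed discriminant of `n` real `n × n` matrices:
`D(A₁,…,Aₙ) = (1/n!) Σ_{σ ∈ S(n)} det(M_σ)`, where the `j`-th column of `M_σ`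
is the `j`-th column of `A_{σ(j)}`. -/
noncomputable def mixedDisc (n : ℕ) (A : Fin n → Matrix (Fin n) (Fin n) ℝ) : ℝ :=
  ((n.factorial : ℝ))⁻¹ *
    ∑ σ : Equiv.Perm (Fin n), (Matrix.of fun i j => A (σ j) i j).det

/-!
In `M_σ` the last column is the last column of `A_{σ(n)}`. Unless `σ(n)` picks `A_S`, this
column vanishes and `det M_σ = 0`. If it does, the last column is `ℓ² eₙ`, so expanding along it
gives `det M_σ = ℓ² det M'_τ`, where `τ` is the permutation `σ` induces between the remaining
columns and the matrices `A₂,…,Aₙ`. Each `τ ∈ S(n-1)` arises once, so the `n!` terms of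
`n! · D` add up to `ℓ² · (n-1)! · D'`.
-/

open Equiv Matrix

namespace Equiv.Perm

def decomposeFinLast {m : ℕ} : Fin (m + 1) × Perm (Fin m) ≃ Perm (Fin (m + 1)) :=
  decomposeFin.symm.trans (Equiv.mulRight (finRotate (m + 1)))

variable {m : ℕ} (p : Fin (m + 1)) (τ : Perm (Fin m))

@[simp]
theorem decomposeFinLast_apply_last : decomposeFinLast (p, τ) (Fin.last m) = p := by
  simp [decomposeFinLast]

@[simp]
theorem decomposeFinLast_apply_castSucc (j : Fin m) :
    decomposeFinLast (p, τ) j.castSucc = swap 0 p (τ j).succ := by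
  simp [decomposeFinLast, finRotate_apply, Fin.coeSucc_eq_succ]

end Equiv.Perm

namespace Matrix

variable {R : Type*} [CommRing R] {m : ℕ}

theorem det_eq_mul_det_submatrix_castSucc_of_col_last (M : Matrix (Fin (m + 1)) (Fin (m + 1)) R)
    (c : R) (hM : ∀ i, M i (Fin.last m) = if i = Fin.last m then c else 0) :
    M.det = c * (M.submatrix Fin.castSucc Fin.castSucc).det := by
  rw [det_succ_column M (Fin.last m), Finset.sum_eq_single (Fin.last m)]
  · simp [hM, ← two_mul, pow_mul]
  · intro i _ hi
    simp [hM, hi]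
  · simp

theorem sum_perm_det_eq_mul_sum_perm_det_castSucc
    (F : Fin (m + 1) → Matrix (Fin (m + 1)) (Fin (m + 1)) R) (c : R)
    (h0 : ∀ i, F 0 i (Fin.last m) = if i = Fin.last m then c else 0)
    (hsucc : ∀ (k : Fin m) i, F k.succ i (Fin.last m) = 0) :
    ∑ σ : Perm (Fin (m + 1)), (of fun i j => F (σ j) i j).det =
      c * ∑ τ : Perm (Fin m), (of fun i j => F (τ j).succ i.castSucc j.castSucc).det := by
  rw [← Perm.decomposeFinLast.sum_comp, Fintype.sum_prod_type, Finset.sum_eq_single 0,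
    Finset.mul_sum]
  · refine Finset.sum_congr rfl fun τ _ => ?_
    rw [det_eq_mul_det_submatrix_castSucc_of_col_last _ c (by simpa using h0)]
    simp [submatrix]
  · intro p _ hp
    obtain ⟨k, rfl⟩ := Fin.exists_succ_eq.mpr hp
    exact Finset.sum_eq_zero fun τ _ =>
      det_eq_zero_of_column_eq_zero (Fin.last m) fun i => by simpa using hsucc k i
  · simp

end Matrix

theorem mixedDisc_reduction {m : ℕ} (ℓ : ℝ)
    (AS : Matrix (Fin (m + 1)) (Fin (m + 1)) ℝ)
    (hAS : AS = Matrix.of fun i j =>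
      if i = Fin.last m ∧ j = Fin.last m then ℓ ^ 2 else 0)
    (A : Fin m → Matrix (Fin (m + 1)) (Fin (m + 1)) ℝ)
    (hAcol : ∀ k i, A k i (Fin.last m) = 0)
    (A' : Fin m → Matrix (Fin m) (Fin m) ℝ)
    (hA' : ∀ k, A' k = Matrix.of fun i j => A k i.castSucc j.castSucc) :
    (m + 1 : ℝ) * mixedDisc (m + 1) (Fin.cons AS fun k => A k) =
      ℓ ^ 2 * mixedDisc m A' := by
  have hsum := sum_perm_det_eq_mul_sum_perm_det_castSucc (Fin.cons AS fun k => A k) (ℓ ^ 2)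
    (by simp [hAS]) (by simpa using hAcol)
  simp only [Fin.cons_succ] at hsum
  rw [mixedDisc, mixedDisc, hsum, Nat.factorial_succ]
  simp only [hA', of_apply]
  push_cast
  field_simp
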